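/- Let V be an idempotent variety and F₂ its free algebra on generators x̄, z̄. If s → z̄ and s'' → z̄, then s̄(s',s'') → z̄ for every s' ∈ F₂. If s ← z̄, s'' ← z̄, and s' ⇢ s'', then s̄(s',s'') ← z̄. -/
import Mathlib


/-- A signature: a type of operation symbols with arities. -/
structure Sgn where
  ops : Type
  arity : ops → ℕ

/-- Terms over a signature with variables from `V`. -/
inductive Trm (S : Sgn) (V : Type) : Type
  | var : V → Trm S V
  | op : (f : S.ops) → (Fin (S.arity f) → Trm S V) → Trm S V

/-- An algebra for a signature. -/
structure Alg (S : Sgn) where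
  carrier : Type
  interp : (f : S.ops) → (Fin (S.arity f) → carrier) → carrier

/-- Evaluation of a term in an algebra under an assignment. -/
def Trm.eval {S : Sgn} {V : Type} (A : Alg S) (asgn : V → A.carrier) :
    Trm S V → A.carrier
  | .var v => asgn v
  | .op f args => A.interp f (fun i => (args i).eval A asgn)

/-- The identity `t ≈ u` holds throughout the class (variety) `K`. -/
def HoldsIn {S : Sgn} {V : Type} (K : Set (Alg S)) (t u : Trm S V) : Prop :=
  ∀ A ∈ K, ∀ asgn : V → A.carrier, t.eval A asgn = u.eval A asgn

/-- Substitution of terms for variables. -/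
def Trm.subst {S : Sgn} {V W : Type} (σ : V → Trm S W) : Trm S V → Trm S W
  | .var v => σ v
  | .op f args => .op f (fun i => (args i).subst σ)

/-- Every basic operation is idempotent throughout `K`. -/
def IdemK {S : Sgn} (K : Set (Alg S)) : Prop :=
  ∀ A ∈ K, ∀ (f : S.ops) (a : A.carrier), A.interp f (fun _ => a) = a

abbrev T3 (S : Sgn) := Trm S (Fin 3)
abbrev T2 (S : Sgn) := Trm S (Fin 2)

def x3 {S : Sgn} : T3 S := .var 0
def y3 {S : Sgn} : T3 S := .var 1
def z3 {S : Sgn} : T3 S := .var 2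

/-- The generator x̄ of the free algebra on two generators (terms as representatives). -/
def xF {S : Sgn} : T2 S := .var 0
/-- The generator z̄. -/
def zF {S : Sgn} : T2 S := .var 1

/-- `app3 t a b c` is the term `t(a,b,c)`. -/
def app3 {S : Sgn} {V : Type} (t : T3 S) (a b c : Trm S V) : Trm S V :=
  t.subst ![a, b, c]

/-- The binary term `ŝ(x,z)` viewed as a ternary term (not depending on `y`). -/
def bin3 {S : Sgn} (s : T2 S) : T3 S := s.subst ![x3, z3]

/-- `sub2 s a b` is `s̄(a,b)`, the composition of binary terms. -/
def sub2 {S : Sgn} (s a b : T2 S) : T2 S := s.subst ![a, b]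

/-- Dashed arrow `s ⇢ r`. -/
def DashedTo {S : Sgn} (K : Set (Alg S)) (s r : T2 S) : Prop :=
  ∃ t : T3 S, HoldsIn K (bin3 s) (app3 t x3 x3 z3) ∧ HoldsIn K (app3 t x3 z3 z3) (bin3 r)

/-- Solid arrow `s → r`. -/
def SolidTo {S : Sgn} (K : Set (Alg S)) (s r : T2 S) : Prop :=
  ∃ t : T3 S, HoldsIn K (bin3 s) (app3 t x3 x3 z3) ∧ HoldsIn K (app3 t x3 z3 z3) (bin3 r) ∧
    HoldsIn K (app3 t x3 y3 x3) x3


namespace ArrowsToZAux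

variable {S : Sgn}

theorem eval_subst {V W : Type} (A : Alg S) (σ : V → Trm S W) (asgn : W → A.carrier) :
    ∀ t : Trm S V, (t.subst σ).eval A asgn = t.eval A (fun v => (σ v).eval A asgn)
  | .var v => rfl
  | .op f args => by
      show A.interp f _ = A.interp f _
      congr 1
      funext i
      exact eval_subst A σ asgn (args i)

theorem eval_idem {V : Type} (A : Alg S)
    (hA : ∀ (f : S.ops) (a : A.carrier), A.interp f (fun _ => a) = a) (a : A.carrier) :
    ∀ t : Trm S V, t.eval A (fun _ => a) = a
  | .var v => rfl
  | .op f args => by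
      show A.interp f _ = a
      have h : (fun i => (args i).eval A (fun _ : V => a)) = (fun _ => a) :=
        funext fun i => eval_idem A hA a (args i)
      rw [h]
      exact hA f a

theorem eval_x3 (A : Alg S) (p q r : A.carrier) : (x3 : T3 S).eval A ![p,q,r] = p := rfl
theorem eval_y3 (A : Alg S) (p q r : A.carrier) : (y3 : T3 S).eval A ![p,q,r] = q := rfl
theorem eval_z3 (A : Alg S) (p q r : A.carrier) : (z3 : T3 S).eval A ![p,q,r] = r := rfl
theorem eval_zF (A : Alg S) (p q : A.carrier) : (zF : T2 S).eval A ![p,q] = q := rfl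

theorem eval_bin3 (A : Alg S) (s : T2 S) (p q r : A.carrier) :
    (bin3 s).eval A ![p,q,r] = s.eval A ![p,r] := by
  unfold bin3
  rw [eval_subst]
  have h : (fun v => ((![x3, z3] : Fin 2 → T3 S) v).eval A ![p,q,r]) = ![p, r] := by
    funext v; fin_cases v <;> rfl
  rw [h]

theorem eval_app3 {V : Type} (A : Alg S) (t : T3 S) (a b c : Trm S V) (asgn : V → A.carrier) :
    (app3 t a b c).eval A asgn = t.eval A ![a.eval A asgn, b.eval A asgn, c.eval A asgn] := by
  unfold app3
  rw [eval_subst]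
  have h : (fun v => ((![a, b, c] : Fin 3 → Trm S V) v).eval A asgn)
      = ![a.eval A asgn, b.eval A asgn, c.eval A asgn] := by
    funext v; fin_cases v <;> rfl
  rw [h]

theorem eval_sub2 (A : Alg S) (s a b : T2 S) (p r : A.carrier) :
    (sub2 s a b).eval A ![p,r] = s.eval A ![a.eval A ![p,r], b.eval A ![p,r]] := by
  unfold sub2
  rw [eval_subst]
  have h : (fun v => ((![a, b] : Fin 2 → T2 S) v).eval A ![p,r])
      = ![a.eval A ![p,r], b.eval A ![p,r]] := by
    funext v; fin_cases v <;> rfl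
  rw [h]

theorem eval_y3z3 (A : Alg S) (w : T2 S) (p q r : A.carrier) :
    (w.subst ![y3, z3]).eval A ![p,q,r] = w.eval A ![q,r] := by
  rw [eval_subst]
  have h : (fun v => ((![y3, z3] : Fin 2 → T3 S) v).eval A ![p,q,r]) = ![q, r] := by
    funext v; fin_cases v <;> rfl
  rw [h]

theorem idem2 (A : Alg S)
    (hA : ∀ (f : S.ops) (a : A.carrier), A.interp f (fun _ => a) = a)
    (w : T2 S) (a : A.carrier) : w.eval A ![a,a] = a := by
  have h : (![a,a] : Fin 2 → A.carrier) = fun _ => a := by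
    funext v; fin_cases v <;> rfl
  rw [h]
  exact eval_idem A hA a w

end ArrowsToZAux

open ArrowsToZAux in
/-- if `s → z̄` and `s'' → z̄` then `s̄(s',s'') → z̄` for every `s'`;
if `s ← z̄`, `s'' ← z̄` and `s' ⇢ s''`, then `s̄(s',s'') ← z̄`. -/
theorem arrows_to_z {S : Sgn} (K : Set (Alg S)) (hid : IdemK K) (s s'' : T2 S) :
    ((SolidTo K s zF) → (SolidTo K s'' zF) →
      ∀ s' : T2 S, SolidTo K (sub2 s s' s'') zF) ∧
    ((SolidTo K zF s) → (SolidTo K zF s'') →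
      ∀ s' : T2 S, DashedTo K s' s'' → SolidTo K zF (sub2 s s' s'')) := by
  constructor
  · rintro ⟨t, ht1, ht2, ht3⟩ ⟨u, hu1, hu2, hu3⟩ s'
    refine ⟨app3 t (bin3 s') (s'.subst ![y3, z3]) u, ?_, ?_, ?_⟩ <;>
      (intro A hAK asgn
       have hfa : asgn = ![asgn 0, asgn 1, asgn 2] := by funext v; fin_cases v <;> rfl
       rw [hfa]
       have T1 : ∀ p r : A.carrier, s.eval A ![p,r] = t.eval A ![p,p,r] := by
         intro p r
         have h := ht1 A hAK ![p,p,r]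
         simpa only [eval_bin3, eval_app3, eval_x3, eval_z3] using h
       have T2 : ∀ p r : A.carrier, t.eval A ![p,r,r] = r := by
         intro p r
         have h := ht2 A hAK ![p,p,r]
         simpa only [eval_bin3, eval_app3, eval_x3, eval_z3, eval_zF] using h
       have T3 : ∀ p q : A.carrier, t.eval A ![p,q,p] = p := by
         intro p q
         have h := ht3 A hAK ![p,q,p]
         simpa only [eval_app3, eval_x3, eval_y3, eval_z3] using h
       have U1 : ∀ p r : A.carrier, s''.eval A ![p,r] = u.eval A ![p,p,r] := by
         intro p r
         have h := hu1 A hAK ![p,p,r]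
         simpa only [eval_bin3, eval_app3, eval_x3, eval_z3] using h
       have U2 : ∀ p r : A.carrier, u.eval A ![p,r,r] = r := by
         intro p r
         have h := hu2 A hAK ![p,p,r]
         simpa only [eval_bin3, eval_app3, eval_x3, eval_z3, eval_zF] using h
       have U3 : ∀ p q : A.carrier, u.eval A ![p,q,p] = p := by
         intro p q
         have h := hu3 A hAK ![p,q,p]
         simpa only [eval_app3, eval_x3, eval_y3, eval_z3] using h
       have idm := idem2 A (hid A hAK))
    · simp only [eval_bin3, eval_app3, eval_x3, eval_z3, eval_sub2, eval_y3z3]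
      rw [← U1, ← T1]
    · simp only [eval_bin3, eval_app3, eval_x3, eval_z3, eval_zF, eval_y3z3]
      rw [idm s', U2]
      exact T2 _ _
    · simp only [eval_bin3, eval_app3, eval_x3, eval_y3, eval_z3]
      rw [eval_y3z3, idm s', U3]
      exact T3 _ _
  · rintro ⟨t, ht1, ht2, ht3⟩ ⟨u, hu1, hu2, hu3⟩ s' ⟨w, hw1, hw2⟩
    refine ⟨app3 t (bin3 s') w u, ?_, ?_, ?_⟩ <;>
      (intro A hAK asgn
       have hfa : asgn = ![asgn 0, asgn 1, asgn 2] := by funext v; fin_cases v <;> rfl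
       rw [hfa]
       have T1 : ∀ p r : A.carrier, r = t.eval A ![p,p,r] := by
         intro p r
         have h := ht1 A hAK ![p,p,r]
         simpa only [eval_bin3, eval_app3, eval_x3, eval_z3, eval_zF] using h
       have T2 : ∀ p r : A.carrier, t.eval A ![p,r,r] = s.eval A ![p,r] := by
         intro p r
         have h := ht2 A hAK ![p,p,r]
         simpa only [eval_bin3, eval_app3, eval_x3, eval_z3] using h
       have T3 : ∀ p q : A.carrier, t.eval A ![p,q,p] = p := by
         intro p q
         have h := ht3 A hAK ![p,q,p]
         simpa only [eval_app3, eval_x3, eval_y3, eval_z3] using h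
       have U1 : ∀ p r : A.carrier, r = u.eval A ![p,p,r] := by
         intro p r
         have h := hu1 A hAK ![p,p,r]
         simpa only [eval_bin3, eval_app3, eval_x3, eval_z3, eval_zF] using h
       have U3 : ∀ p q : A.carrier, u.eval A ![p,q,p] = p := by
         intro p q
         have h := hu3 A hAK ![p,q,p]
         simpa only [eval_app3, eval_x3, eval_y3, eval_z3] using h
       have U2 : ∀ p r : A.carrier, u.eval A ![p,r,r] = s''.eval A ![p,r] := by
         intro p r
         have h := hu2 A hAK ![p,p,r]
         simpa only [eval_bin3, eval_app3, eval_x3, eval_z3] using h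
       have W1 : ∀ p r : A.carrier, s'.eval A ![p,r] = w.eval A ![p,p,r] := by
         intro p r
         have h := hw1 A hAK ![p,p,r]
         simpa only [eval_bin3, eval_app3, eval_x3, eval_z3] using h
       have W2 : ∀ p r : A.carrier, w.eval A ![p,r,r] = s''.eval A ![p,r] := by
         intro p r
         have h := hw2 A hAK ![p,p,r]
         simpa only [eval_bin3, eval_app3, eval_x3, eval_z3] using h
       have idm := idem2 A (hid A hAK))
    · simp only [eval_bin3, eval_app3, eval_x3, eval_z3, eval_zF]
      rw [← W1, ← U1]
      exact T1 _ _
    · simp only [eval_bin3, eval_app3, eval_x3, eval_z3, eval_sub2]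
      rw [W2, U2]
      exact T2 _ _
    · simp only [eval_bin3, eval_app3, eval_x3, eval_y3, eval_z3]
      rw [idm s', U3]
      exact T3 _ _
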